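/- Let X be a finite set with n ≥ 2 elements and k(x,y) = 1 for all x ≠ y (so the underlying graph of L is the complete graph K_n). Then for every α ∈ (0, 1/2), the Markov generator L satisfies CD_Υ( √(2n(1−2α)), n/α ), i.e. Ψ_{2,Υ}(f)(x) ≥ √(2n(1−2α))·Ψ_Υ(f)(x) + (α/n)·max{−L f(x), 0}² for all f : X → ℝ and all x ∈ X. -/

import Mathlib

open Real Filter MeasureTheory Set

/-- `Υ(r) = e^r - r - 1`. -/
noncomputable def Ups (r : ℝ) : ℝ := Real.exp r - r - 1

/-- `M₁(x) = ∑_{y ≠ x} k(x,y)`. -/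
noncomputable def M1fn {X : Type*} (k : X → X → ℝ) (x : X) : ℝ :=
  ∑' y : {y : X // y ≠ x}, k x y

/-- The Markov generator `L f(x) = ∑_y k(x,y)(f(y) - f(x))`. -/
noncomputable def genOp {X : Type*} (k : X → X → ℝ) (f : X → ℝ) (x : X) : ℝ :=
  ∑' y, k x y * (f y - f x)

/-- `Ψ_Υ(f)(x) = ∑_y k(x,y) Υ(f(y) - f(x))`. -/
noncomputable def psiUps {X : Type*} (k : X → X → ℝ) (f : X → ℝ) (x : X) : ℝ :=
  ∑' y, k x y * Ups (f y - f x)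

/-- `B_{Υ'}(f,g)(x) = ∑_y k(x,y) Υ'(f(y)-f(x)) (g(y)-g(x))`. -/
noncomputable def bUps {X : Type*} (k : X → X → ℝ) (f g : X → ℝ) (x : X) : ℝ :=
  ∑' y, k x y * (Real.exp (f y - f x) - 1) * (g y - g x)

/-- `Ψ_{2,Υ}(f) = (1/2)(L Ψ_Υ(f) - B_{Υ'}(f, L f))`. -/
noncomputable def psi2Ups {X : Type*} (k : X → X → ℝ) (f : X → ℝ) (x : X) : ℝ :=
  (1/2) * (genOp k (psiUps k f) x - bUps k f (genOp k f) x)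

/-- Boundedness of a real-valued function on the state space. -/
def BddFun {X : Type*} (f : X → ℝ) : Prop := ∃ B : ℝ, ∀ x, |f x| ≤ B

/-- The standing assumptions on the transition rates: nonnegative off-diagonal rates,
`M₁(x) < ∞` (summability), `k(x,x) = -M₁(x)`, and `M₂(x) < ∞`. -/
def KernelSetting {X : Type*} (k : X → X → ℝ) : Prop :=
  (∀ x y, x ≠ y → 0 ≤ k x y) ∧
  (∀ x : X, Summable fun y : {y : X // y ≠ x} => k x y) ∧
  (∀ x : X, k x x = -M1fn k x) ∧
  (∀ x : X, Summable fun y : {y : X // y ≠ x} => k x y * M1fn k y)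

/-- A CD-function: continuous and nonnegative on `[0,∞)` with `F(0) = 0`, `F(r)/r`
strictly increasing on `(0,∞)` and `1/F` integrable at `∞`. -/
def IsCDFunction (F : ℝ → ℝ) : Prop :=
  ContinuousOn F (Ici 0) ∧ F 0 = 0 ∧ (∀ r : ℝ, 0 ≤ r → 0 ≤ F r) ∧
  StrictMonoOn (fun r => F r / r) (Ioi 0) ∧
  ∃ c : ℝ, 0 < c ∧ IntegrableOn (fun r => 1 / F r) (Ioi c)

/-- The trivial extension `F₀` of `F : [0,∞) → [0,∞)` by `0` on `(-∞,0)`. -/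
noncomputable def trivExt (F : ℝ → ℝ) : ℝ → ℝ := fun r => if 0 ≤ r then F r else 0

/-- The condition `CD_Υ(κ,F)` at a point `x`. -/
def CDUpsAt {X : Type*} (k : X → X → ℝ) (κ : ℝ) (F : ℝ → ℝ) (x : X) : Prop :=
  ∀ f : X → ℝ, BddFun f →
    κ * psiUps k f x + trivExt F (-genOp k f x) ≤ psi2Ups k f x

/-- The condition `CD_Υ(κ,F)` (at every point). -/
def CDUps {X : Type*} (k : X → X → ℝ) (κ : ℝ) (F : ℝ → ℝ) : Prop :=
  ∀ x : X, CDUpsAt k κ F x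

/-!
Write `z_y = f y - f x`. On the complete graph `L f(y) - L f(x) = -n z_y` and
`Ψ_Υ(f)(y) ≥ Υ(-z_y)`, so `Ψ_{2,Υ}(f)(x)` dominates `∑_y (cosh z_y - 1 + (n/2) H(z_y))`
with `H(z) = z e^z - e^z + 1`, while by Cauchy–Schwarz
`(α/n) max(-L f(x), 0)² ≤ α ∑_y max(-z_y, 0)²`.
This reduces the claim to one real variable, where it follows by AM–GM from
`max(-z, 0)² ≤ z² ≤ 2 (cosh z - 1)` and the key inequality `Υ(z)² ≤ H(z) (cosh z - 1)`.
The latter is Cauchy–Schwarz for the primitives of `e^t - 1`, `t e^t` and `sinh t`, whose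
derivatives satisfy `(e^t - 1)² ≤ t e^t sinh t`.
-/

lemma apply_zero_le_of_mul_deriv_nonneg {F F' : ℝ → ℝ} (hF : ∀ t, HasDerivAt F (F' t) t)
    (hF' : ∀ t, 0 ≤ t * F' t) (z : ℝ) : F 0 ≤ F z := by
  have hcont : Continuous F := continuous_iff_continuousAt.2 fun t => (hF t).continuousAt
  rcases le_total 0 z with hz | hz
  · refine monotoneOn_of_hasDerivWithinAt_nonneg (convex_Ici 0) hcont.continuousOn
      (fun t _ => (hF t).hasDerivWithinAt) (fun t ht => ?_) self_mem_Ici hz hz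
    rw [interior_Ici] at ht
    exact nonneg_of_mul_nonneg_right (hF' t) ht
  · refine antitoneOn_of_hasDerivWithinAt_nonpos (convex_Iic 0) hcont.continuousOn
      (fun t _ => (hF t).hasDerivWithinAt) (fun t ht => ?_) hz self_mem_Iic hz
    rw [interior_Iic] at ht
    exact nonpos_of_mul_nonneg_right (hF' t) ht

lemma quadratic_nonneg_of_sq_le {a b c : ℝ} (ha : 0 ≤ a) (hc : 0 ≤ c) (hb : b ^ 2 ≤ a * c)
    (x : ℝ) : 0 ≤ a * (x * x) - 2 * b * x + c := by
  rcases ha.eq_or_lt with rfl | ha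
  · have hb0 : b = 0 := by nlinarith
    subst hb0
    linarith
  · refine nonneg_of_mul_nonneg_right ?_ ha
    nlinarith [sq_nonneg (a * x - b)]

lemma sq_le_mul_of_hasDerivAt {u h c u' h' c' : ℝ → ℝ} (hu : ∀ t, HasDerivAt u (u' t) t)
    (hh : ∀ t, HasDerivAt h (h' t) t) (hc : ∀ t, HasDerivAt c (c' t) t)
    (hu0 : u 0 = 0) (hh0 : h 0 = 0) (hc0 : c 0 = 0)
    (hh' : ∀ t, 0 ≤ t * h' t) (hc' : ∀ t, 0 ≤ t * c' t)
    (hu' : ∀ t, u' t ^ 2 ≤ h' t * c' t) (z : ℝ) : u z ^ 2 ≤ h z * c z := by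
  have hquad : ∀ x : ℝ, 0 ≤ h z * (x * x) + -2 * u z * x + c z := by
    intro x
    -- `t ↦ x² h t - 2 x u t + c t` has derivative of the sign of `t`: it is minimal at `0`
    have hmono := apply_zero_le_of_mul_deriv_nonneg
      (F := fun t => h t * (x * x) - 2 * u t * x + c t)
      (fun t => (((hh t).mul_const _).sub (((hu t).const_mul 2).mul_const x)).add (hc t))
      (fun t => ?_) z
    · simp only [hh0, hu0, hc0] at hmono
      linarith
    · have := quadratic_nonneg_of_sq_le (hh' t) (hc' t)
        (b := t * u' t) (by nlinarith [hu' t, sq_nonneg t]) x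
      linarith
  have := discrim_le_zero hquad
  rw [discrim] at this
  nlinarith

lemma one_sub_mul_exp_le (t : ℝ) : (1 - t) * exp t ≤ 1 := by
  have := mul_le_mul_of_nonneg_right (add_one_le_exp (-t)) (exp_pos t).le
  rwa [← exp_add, neg_add_cancel, exp_zero, neg_add_eq_sub] at this

lemma sq_exp_sub_one_le_mul_sinh (t : ℝ) : (exp t - 1) ^ 2 ≤ t * exp t * sinh t := by
  have hmono : Monotone fun s => 2 + s - (2 - s) * exp s :=
    monotone_of_hasDerivAt_nonneg
      (fun s => (((hasDerivAt_id s).const_add 2).sub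
        (((hasDerivAt_id s).const_sub 2).mul (hasDerivAt_exp s))))
      (fun s => by
        simp only [Pi.zero_apply, id]
        linarith [one_sub_mul_exp_le s])
  have hfactor : t * exp t * sinh t - (exp t - 1) ^ 2
      = (exp t - 1) * (2 + t - (2 - t) * exp t) / 2 := by
    rw [sinh_eq]
    have : exp t * exp (-t) = 1 := by rw [← exp_add, add_neg_cancel, exp_zero]
    linear_combination (-t / 2) * this
  have hsign : 0 ≤ (exp t - 1) * (2 + t - (2 - t) * exp t) := by
    rcases le_total 0 t with ht | ht
    · have := hmono ht
      simp only [exp_zero] at this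
      exact mul_nonneg (by linarith [one_le_exp ht]) (by linarith)
    · have := hmono ht
      simp only [exp_zero] at this
      exact mul_nonneg_of_nonpos_of_nonpos (by linarith [exp_le_one_iff.2 ht]) (by linarith)
  linarith

lemma sq_le_two_mul_cosh_sub_one (z : ℝ) : z ^ 2 ≤ 2 * (cosh z - 1) := by
  have := apply_zero_le_of_mul_deriv_nonneg (F := fun t => 2 * (cosh t - 1) - t ^ 2)
    (fun t => (((hasDerivAt_cosh t).sub_const 1).const_mul 2).sub (hasDerivAt_pow 2 t))
    (fun t => by
      norm_num only [Nat.cast_ofNat, pow_one]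
      rcases le_total 0 t with ht | ht
      · nlinarith [self_le_sinh_iff.2 ht]
      · nlinarith [sinh_le_self_iff.2 ht]) z
  simp only [cosh_zero] at this
  linarith

lemma Ups_nonneg (r : ℝ) : 0 ≤ Ups r := by
  unfold Ups
  linarith [add_one_le_exp r]

lemma Ups_add_Ups_neg (z : ℝ) : Ups z + Ups (-z) = 2 * (cosh z - 1) := by
  rw [Ups, Ups, cosh_eq]
  ring

lemma Ups_sq_le (z : ℝ) : Ups z ^ 2 ≤ ((exp z - 1) * z - Ups z) * (cosh z - 1) := by
  have hUps : ∀ t, HasDerivAt Ups (exp t - 1) t := fun t =>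
    ((hasDerivAt_exp t).sub (hasDerivAt_id t)).sub_const 1
  refine sq_le_mul_of_hasDerivAt (h := fun t => (exp t - 1) * t - Ups t)
    (c := fun t => cosh t - 1) (h' := fun t => t * exp t) hUps
    (fun t => (((hasDerivAt_exp t).sub_const 1).mul (hasDerivAt_id t)).sub (hUps t)
      |>.congr_deriv (by simp only [id]; ring))
    (fun t => (hasDerivAt_cosh t).sub_const 1) (by simp [Ups]) (by simp [Ups]) (by simp)
    (fun t => by nlinarith [mul_self_nonneg t, exp_pos t]) (fun t => ?_)
    (fun t => by simpa only [mul_assoc] using sq_exp_sub_one_le_mul_sinh t) z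
  rcases le_total 0 t with ht | ht
  · exact mul_nonneg ht (sinh_nonneg_iff.2 ht)
  · exact mul_nonneg_of_nonpos_of_nonpos ht (sinh_nonpos_iff.2 ht)

lemma sqrt_mul_Ups_add_sq_le {N α : ℝ} (hN : 0 ≤ N) (hα0 : 0 ≤ α) (hα1 : α ≤ 1 / 2)
    (z : ℝ) :
    √(2 * N * (1 - 2 * α)) * Ups z + α * max (-z) 0 ^ 2
      ≤ (Ups z + Ups (-z)) / 2 + N / 2 * ((exp z - 1) * z - Ups z) := by
  set C := cosh z - 1
  set H := (exp z - 1) * z - Ups z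
  set D := C - α * max (-z) 0 ^ 2
  have hH : 0 ≤ H := by
    simp only [H, Ups]
    linarith [one_sub_mul_exp_le z]
  have hC : 0 ≤ C := by linarith [sq_le_two_mul_cosh_sub_one z, sq_nonneg z]
  have hmax : max (-z) 0 ^ 2 ≤ 2 * C := by
    refine le_trans (sq_le_sq.2 ?_) (sq_le_two_mul_cosh_sub_one z)
    rw [abs_of_nonneg (le_max_right _ _)]
    exact max_le (neg_le_abs z) (abs_nonneg z)
  have hDC : (1 - 2 * α) * C ≤ D := by nlinarith
  have hD : 0 ≤ D := le_trans (mul_nonneg (by linarith) hC) hDC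
  have hsq : (2 * N * (1 - 2 * α)) * Ups z ^ 2 ≤ (D + N / 2 * H) ^ 2 := by
    calc (2 * N * (1 - 2 * α)) * Ups z ^ 2
        ≤ (2 * N * (1 - 2 * α)) * (H * C) := by
          gcongr
          · nlinarith
          · exact Ups_sq_le z
      _ ≤ 2 * N * H * D := by nlinarith [mul_le_mul_of_nonneg_left hDC (mul_nonneg hN hH)]
      _ ≤ (D + N / 2 * H) ^ 2 := by nlinarith [sq_nonneg (D - N / 2 * H)]
  have hκ : √(2 * N * (1 - 2 * α)) * Ups z ≤ D + N / 2 * H := by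
    rw [← sqrt_sq (Ups_nonneg z), ← sqrt_mul (by nlinarith)]
    exact sqrt_le_iff.2 ⟨by positivity, hsq⟩
  rw [Ups_add_Ups_neg]
  linarith

section CompleteGraph

variable {X : Type*} [Fintype X] {k : X → X → ℝ}

lemma tsum_rate_mul_eq_sum (hk : ∀ x y : X, x ≠ y → k x y = 1) {x : X} {φ : X → ℝ}
    (hφ : φ x = 0) : ∑' y, k x y * φ y = ∑ y, φ y := by
  rw [tsum_fintype]
  refine Finset.sum_congr rfl fun y _ => ?_
  rcases eq_or_ne x y with rfl | hxy
  · rw [hφ, mul_zero]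
  · rw [hk x y hxy, one_mul]

lemma genOp_eq_sum (hk : ∀ x y : X, x ≠ y → k x y = 1) (g : X → ℝ) (x : X) :
    genOp k g x = ∑ y, (g y - g x) :=
  tsum_rate_mul_eq_sum hk (sub_self _)

lemma psiUps_eq_sum (hk : ∀ x y : X, x ≠ y → k x y = 1) (f : X → ℝ) (x : X) :
    psiUps k f x = ∑ y, Ups (f y - f x) :=
  tsum_rate_mul_eq_sum hk (by simp [Ups])

lemma genOp_sub_genOp (hk : ∀ x y : X, x ≠ y → k x y = 1) (f : X → ℝ) (x y : X) :
    genOp k f y - genOp k f x = -(Fintype.card X : ℝ) * (f y - f x) := by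
  simp only [genOp_eq_sum hk, ← Finset.sum_sub_distrib, sub_sub_sub_cancel_left,
    Finset.sum_const, Finset.card_univ, nsmul_eq_mul]
  ring

lemma bUps_genOp_eq_sum (hk : ∀ x y : X, x ≠ y → k x y = 1) (f : X → ℝ) (x : X) :
    bUps k f (genOp k f) x
      = -(Fintype.card X : ℝ) * ∑ y, (exp (f y - f x) - 1) * (f y - f x) := by
  rw [bUps]
  simp only [mul_assoc]
  rw [tsum_rate_mul_eq_sum hk (by simp), Finset.mul_sum]
  refine Finset.sum_congr rfl fun y _ => ?_
  rw [genOp_sub_genOp hk]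
  ring

lemma psiUps_add_sum_Ups_le (hk : ∀ x y : X, x ≠ y → k x y = 1) (f : X → ℝ) (x : X) :
    psiUps k f x + ∑ y, Ups (f x - f y) ≤ ∑ y, psiUps k f y := by
  have hterm : ∀ y, Ups (f x - f y) ≤ psiUps k f y := fun y => by
    rw [psiUps_eq_sum hk]
    exact Finset.single_le_sum (f := fun w => Ups (f w - f y)) (fun w _ => Ups_nonneg _)
      (Finset.mem_univ x)
  classical
  rw [← Finset.sum_erase _ (a := x) (by simp [Ups]),
    ← Finset.add_sum_erase _ _ (Finset.mem_univ x)]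
  gcongr with y
  exact hterm y

lemma sum_le_psi2Ups (hk : ∀ x y : X, x ≠ y → k x y = 1) (f : X → ℝ) (x : X) :
    ∑ y, ((Ups (f y - f x) + Ups (-(f y - f x))) / 2 + (Fintype.card X : ℝ) / 2 *
        ((exp (f y - f x) - 1) * (f y - f x) - Ups (f y - f x)))
      ≤ psi2Ups k f x := by
  have hlow := psiUps_add_sum_Ups_le hk f x
  rw [psi2Ups, genOp_eq_sum hk, bUps_genOp_eq_sum hk, Finset.sum_sub_distrib, Finset.sum_const,
    Finset.card_univ, nsmul_eq_mul]
  simp only [neg_sub, Finset.sum_add_distrib, ← Finset.sum_div, ← Finset.mul_sum,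
    Finset.sum_sub_distrib]
  rw [psiUps_eq_sum hk] at hlow ⊢
  linarith

lemma max_neg_genOp_sq_le (hk : ∀ x y : X, x ≠ y → k x y = 1) (f : X → ℝ) (x : X) :
    max (-genOp k f x) 0 ^ 2 ≤ (Fintype.card X : ℝ) * ∑ y, max (-(f y - f x)) 0 ^ 2 := by
  have hsum : max (-genOp k f x) 0 ≤ ∑ y, max (-(f y - f x)) 0 := by
    rw [genOp_eq_sum hk, ← Finset.sum_neg_distrib]
    exact max_le (Finset.sum_le_sum fun y _ => le_max_left _ _)
      (Finset.sum_nonneg fun y _ => le_max_right _ _)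
  calc max (-genOp k f x) 0 ^ 2 ≤ (∑ y, max (-(f y - f x)) 0) ^ 2 := by gcongr
    _ ≤ _ := by
      simpa using sq_sum_le_card_mul_sum_sq (s := Finset.univ) (f := fun y => max (-(f y - f x)) 0)

end CompleteGraph

theorem stmt_13_general {X : Type*} [Fintype X]
    (k : X → X → ℝ) (hkoff : ∀ x y : X, x ≠ y → k x y = 1)
    (α : ℝ) (hα0 : 0 < α) (hα1 : α < 1/2) :
    ∀ (f : X → ℝ) (x : X),
      Real.sqrt (2 * (Fintype.card X : ℝ) * (1 - 2 * α)) * psiUps k f x +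
          α / (Fintype.card X : ℝ) * max (-genOp k f x) 0 ^ 2
        ≤ psi2Ups k f x := by
  intro f x
  have hn : (0 : ℝ) < Fintype.card X := Nat.cast_pos.2 (Fintype.card_pos_iff.2 ⟨x⟩)
  have hmax : α / (Fintype.card X : ℝ) * max (-genOp k f x) 0 ^ 2
      ≤ α * ∑ y, max (-(f y - f x)) 0 ^ 2 := by
    calc _ ≤ α / (Fintype.card X : ℝ) *
            ((Fintype.card X : ℝ) * ∑ y, max (-(f y - f x)) 0 ^ 2) := by
          gcongr
          exact max_neg_genOp_sq_le hkoff f x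
      _ = _ := by field_simp
  calc _ ≤ ∑ y, (√(2 * (Fintype.card X : ℝ) * (1 - 2 * α)) * Ups (f y - f x)
          + α * max (-(f y - f x)) 0 ^ 2) := by
        rw [Finset.sum_add_distrib, ← Finset.mul_sum, ← Finset.mul_sum, ← psiUps_eq_sum hkoff]
        linarith
    _ ≤ _ := Finset.sum_le_sum fun y _ =>
        sqrt_mul_Ups_add_sq_le hn.le hα0.le hα1.le (f y - f x)
    _ ≤ psi2Ups k f x := sum_le_psi2Ups hkoff f x

/-- Example 2.9: the complete graph `K_n` (n ≥ 2): `L` satisfies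
`CD_Υ(√(2n(1-2α)), n/α)` for every `α ∈ (0,1/2)`. -/
theorem stmt_13 {X : Type*} [Fintype X] (hcard : 2 ≤ Fintype.card X)
    (k : X → X → ℝ) (hkoff : ∀ x y : X, x ≠ y → k x y = 1)
    (hkdiag : ∀ x : X, k x x = 1 - (Fintype.card X : ℝ))
    (α : ℝ) (hα0 : 0 < α) (hα1 : α < 1/2) :
    ∀ (f : X → ℝ) (x : X),
      Real.sqrt (2 * (Fintype.card X : ℝ) * (1 - 2 * α)) * psiUps k f x +
          α / (Fintype.card X : ℝ) * max (-genOp k f x) 0 ^ 2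
        ≤ psi2Ups k f x :=
  stmt_13_general k hkoff α hα0 hα1
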